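/- arXiv:2011.08263 — 4 statements merged into one kernel-verified Lean document; each statement's English description precedes it below -/
import Mathlib

section
/- Let H0, HM, Δ', Δ'' be Hermitian n×n complex matrices and let H be the 2n×2n block matrix [[H0 + HM, Δ' − iΔ''],[Δ' + iΔ'', −H0 + HM]]. If the smallest eigenvalues λ₊ and λ₋ of Δ' + HM and Δ' − HM respectively are both positive, then H has no eigenvalue E with −λ₋ < E < λ₊. -/
/-!
Write `K = H0 + iΔ''`. The block Hadamard matrix `T = [[1, 1], [1, -1]]`, i.e. the change of
variables `u = x + y`, `z = x - y`, conjugates `H` into `[[Δ' + HM, K], [Kᴴ, -(Δ' - HM)]]`.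
For an eigenvector `(u, z)` with eigenvalue `E`, pair the two rows with `u` and `z` and subtract
the real parts. The cross terms `⟨u, K z⟩` and `⟨z, Kᴴ u⟩` have equal real parts and cancel,
which leaves `⟨u, (Δ' + HM) u⟩ + ⟨z, (Δ' - HM) z⟩ = E (|u|² - |z|²)`. The left side is at least
`λ₊ |u|² + λ₋ |z|²`, so `(λ₊ - E) |u|² + (λ₋ + E) |z|² ≤ 0`. When `-λ₋ < E < λ₊` this forces
`u = z = 0`.
-/

open Matrix

namespace Matrix

section RCLike

variable {𝕜 : Type*} [RCLike 𝕜]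

open scoped ComplexOrder

lemma re_dotProduct_star_self_nonneg {n : Type*} [Fintype n] (x : n → 𝕜) :
    0 ≤ RCLike.re (star x ⬝ᵥ x) :=
  (RCLike.nonneg_iff.mp (dotProduct_star_self_nonneg x)).1

lemma re_dotProduct_star_self_eq_zero {n : Type*} [Fintype n] {x : n → 𝕜} :
    RCLike.re (star x ⬝ᵥ x) = 0 ↔ x = 0 := by
  refine ⟨fun h => dotProduct_star_self_eq_zero.mp (RCLike.ext ?_ ?_), fun h => by simp [h]⟩
  · simpa using h
  · simpa using (RCLike.nonneg_iff.mp (dotProduct_star_self_nonneg x)).2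

lemma re_dotProduct_conjTranspose_mulVec {m n : Type*} [Fintype m] [Fintype n]
    (K : Matrix m n 𝕜) (x : m → 𝕜) (z : n → 𝕜) :
    RCLike.re (star z ⬝ᵥ Kᴴ *ᵥ x) = RCLike.re (star x ⬝ᵥ K *ᵥ z) := by
  rw [dotProduct_mulVec, ← star_mulVec, star_dotProduct, RCLike.star_def, RCLike.conj_re]

open scoped MatrixOrder in
lemma IsHermitian.mul_re_dotProduct_self_le_re_dotProduct_mulVec {n : Type*} [Fintype n]
    [DecidableEq n] {A : Matrix n n 𝕜} (hA : A.IsHermitian) {c : ℝ}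
    (hc : ∀ i, c ≤ hA.eigenvalues i) (x : n → 𝕜) :
    c * RCLike.re (star x ⬝ᵥ x) ≤ RCLike.re (star x ⬝ᵥ A *ᵥ x) := by
  have hcA : algebraMap ℝ (Matrix n n 𝕜) c ≤ A := by
    rw [algebraMap_le_iff_le_spectrum hA.isSelfAdjoint, hA.spectrum_real_eq_range_eigenvalues]
    rintro _ ⟨i, rfl⟩
    exact hc i
  have := (le_iff.mp hcA).re_dotProduct_nonneg x
  rw [sub_mulVec, dotProduct_sub, map_sub, Algebra.algebraMap_eq_smul_one, smul_mulVec,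
    one_mulVec, dotProduct_smul] at this
  simpa [sub_nonneg, RCLike.smul_re] using this

theorem eq_zero_of_fromBlocks_conjTranspose_mulVec_eq_smul {m p : Type*} [Fintype m]
    [Fintype p] {P : Matrix m m 𝕜} {Q : Matrix p p 𝕜} (K : Matrix m p 𝕜) {lp lm E : ℝ}
    (hP : ∀ x, lp * RCLike.re (star x ⬝ᵥ x) ≤ RCLike.re (star x ⬝ᵥ P *ᵥ x))
    (hQ : ∀ z, lm * RCLike.re (star z ⬝ᵥ z) ≤ RCLike.re (star z ⬝ᵥ Q *ᵥ z))
    (hlm : -lm < E) (hlp : E < lp) {w : m ⊕ p → 𝕜}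
    (hw : fromBlocks P K Kᴴ (-Q) *ᵥ w = (E : 𝕜) • w) : w = 0 := by
  obtain ⟨x, z, rfl⟩ : ∃ x z, w = x ⊕ᵥ z := ⟨_, _, (Sum.elim_comp_inl_inr w).symm⟩
  rw [fromBlocks_mulVec] at hw
  have hx : P *ᵥ x + K *ᵥ z = (E : 𝕜) • x := funext fun i => by simpa using congrFun hw (.inl i)
  have hz : Kᴴ *ᵥ x - Q *ᵥ z = (E : 𝕜) • z := funext fun i => by
    simpa [sub_eq_add_neg, neg_mulVec] using congrFun hw (.inr i)
  have hxx := congrArg (fun v => RCLike.re (star x ⬝ᵥ v)) hx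
  have hzz := congrArg (fun v => RCLike.re (star z ⬝ᵥ v)) hz
  simp only [dotProduct_add, dotProduct_sub, dotProduct_smul, map_add, map_sub, smul_eq_mul,
    re_dotProduct_conjTranspose_mulVec, RCLike.re_ofReal_mul] at hxx hzz
  have hx0 := re_dotProduct_star_self_nonneg x
  have hz0 := re_dotProduct_star_self_nonneg z
  have henergy : (lp - E) * RCLike.re (star x ⬝ᵥ x) + (lm + E) * RCLike.re (star z ⬝ᵥ z) ≤ 0 := by
    linarith [hP x, hQ z]
  obtain rfl : x = 0 := re_dotProduct_star_self_eq_zero.mp (by nlinarith)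
  obtain rfl : z = 0 := re_dotProduct_star_self_eq_zero.mp (by nlinarith)
  exact Sum.elim_zero_zero

end RCLike

lemma reindex_mulVec_eq_smul_iff {m n R : Type*} [Fintype m] [Fintype n] [Semiring R]
    (e : m ≃ n) (M : Matrix m m R) (v : n → R) (c : R) :
    reindex e e M *ᵥ v = c • v ↔ M *ᵥ (v ∘ e) = c • (v ∘ e) := by
  rw [reindex_apply, submatrix_mulVec_equiv, Equiv.symm_symm, Equiv.comp_symm_eq]
  rfl

def blockHadamard (n R : Type*) [DecidableEq n] [Ring R] : Matrix (n ⊕ n) (n ⊕ n) R :=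
  fromBlocks 1 1 1 (-1)

lemma blockHadamard_mul_self {n R : Type*} [Fintype n] [DecidableEq n] [Ring R] :
    blockHadamard n R * blockHadamard n R = 2 := by
  rw [blockHadamard, fromBlocks_multiply]
  ext (i | i) (j | j) <;> by_cases h : i = j <;> simp [one_add_one_eq_two, ofNat_apply, h]

lemma blockHadamard_mulVec_injective {n K : Type*} [Fintype n] [DecidableEq n] [Field K]
    [CharZero K] : Function.Injective (blockHadamard n K *ᵥ ·) := by
  intro v w h
  simpa [mulVec_mulVec, blockHadamard_mul_self] using congrArg (blockHadamard n K *ᵥ ·) h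

lemma blockHadamard_mul_fromBlocks_bdg {n : Type*} [Fintype n] [DecidableEq n]
    {H0 Δ'' : Matrix n n ℂ} (HM Δ' : Matrix n n ℂ) (hH0 : H0.IsHermitian)
    (hΔ'' : Δ''.IsHermitian) :
    blockHadamard n ℂ *
        fromBlocks (H0 + HM) (Δ' - Complex.I • Δ'') (Δ' + Complex.I • Δ'') (-H0 + HM) =
      fromBlocks (Δ' + HM) (H0 + Complex.I • Δ'') (H0 + Complex.I • Δ'')ᴴ (-(Δ' - HM)) *
        blockHadamard n ℂ := by
  have hK : (H0 + Complex.I • Δ'')ᴴ = H0 - Complex.I • Δ'' := by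
    simp [conjTranspose_add, conjTranspose_smul, hH0.eq, hΔ''.eq, sub_eq_add_neg]
  rw [hK, blockHadamard, fromBlocks_multiply, fromBlocks_multiply]
  simp only [one_mul, mul_one, neg_mul, mul_neg, fromBlocks_inj]
  refine ⟨?_, ?_, ?_, ?_⟩ <;> abel

end Matrix

theorem stmt_3_general {n : ℕ} (H0 HM Δ' Δ'' : Matrix (Fin n) (Fin n) ℂ)
    (hH0 : H0.IsHermitian)
    (hΔ'' : Δ''.IsHermitian)
    (hp : (Δ' + HM).IsHermitian) (hm : (Δ' - HM).IsHermitian)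
    (lp lm : ℝ)
    (hlp : lp = ⨅ i, hp.eigenvalues i) (hlm : lm = ⨅ i, hm.eigenvalues i)
    (H : Matrix (Fin (n + n)) (Fin (n + n)) ℂ)
    (hH : H = Matrix.reindex finSumFinEquiv finSumFinEquiv
      (Matrix.fromBlocks (H0 + HM) (Δ' - Complex.I • Δ'')
        (Δ' + Complex.I • Δ'') (-H0 + HM))) :
    ¬ ∃ (E : ℝ) (v : Fin (n + n) → ℂ), v ≠ 0 ∧
      H.mulVec v = (E : ℂ) • v ∧ -lm < E ∧ E < lp := by
  rintro ⟨E, v, hv0, hv, hE1, hE2⟩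
  set T := blockHadamard (Fin n) ℂ
  set w := v ∘ finSumFinEquiv
  have hw : _ *ᵥ w = (E : ℂ) • w := (reindex_mulVec_eq_smul_iff _ _ _ _).mp (hH ▸ hv)
  have hTw : fromBlocks (Δ' + HM) (H0 + Complex.I • Δ'') (H0 + Complex.I • Δ'')ᴴ (-(Δ' - HM)) *ᵥ
      (T *ᵥ w) = (E : ℂ) • (T *ᵥ w) := by
    rw [mulVec_mulVec, ← blockHadamard_mul_fromBlocks_bdg HM Δ' hH0 hΔ'', ← mulVec_mulVec, hw,
      mulVec_smul]
  have hTw0 : T *ᵥ w = 0 :=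
    eq_zero_of_fromBlocks_conjTranspose_mulVec_eq_smul _
      (hp.mul_re_dotProduct_self_le_re_dotProduct_mulVec
        fun i => hlp ▸ ciInf_le (Set.finite_range _).bddBelow i)
      (hm.mul_re_dotProduct_self_le_re_dotProduct_mulVec
        fun i => hlm ▸ ciInf_le (Set.finite_range _).bddBelow i)
      hE1 hE2 hTw
  have hw0 : w = 0 := blockHadamard_mulVec_injective (hTw0.trans (mulVec_zero T).symm)
  exact hv0 (funext fun i => by simpa [w] using congrFun hw0 (finSumFinEquiv.symm i))

theorem stmt_3 {n : ℕ} (H0 HM Δ' Δ'' : Matrix (Fin n) (Fin n) ℂ)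
    (hH0 : H0.IsHermitian) (hHM : HM.IsHermitian)
    (hΔ' : Δ'.IsHermitian) (hΔ'' : Δ''.IsHermitian)
    (hp : (Δ' + HM).IsHermitian) (hm : (Δ' - HM).IsHermitian)
    (lp lm : ℝ)
    (hlp : lp = ⨅ i, hp.eigenvalues i) (hlm : lm = ⨅ i, hm.eigenvalues i)
    (hlp0 : 0 < lp) (hlm0 : 0 < lm)
    (H : Matrix (Fin (n + n)) (Fin (n + n)) ℂ)
    (hH : H = Matrix.reindex finSumFinEquiv finSumFinEquiv
      (Matrix.fromBlocks (H0 + HM) (Δ' - Complex.I • Δ'')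
        (Δ' + Complex.I • Δ'') (-H0 + HM))) :
    ¬ ∃ (E : ℝ) (v : Fin (n + n) → ℂ), v ≠ 0 ∧
      H.mulVec v = (E : ℂ) • v ∧ -lm < E ∧ E < lp :=
  stmt_3_general H0 HM Δ' Δ'' hH0 hΔ'' hp hm lp lm hlp hlm H hH
end

section
/- Let H0, HM, Δ', Δ'' be Hermitian n×n matrices with Δ' + HM and Δ' − HM positive definite, and H the 2n×2n block matrix [[H0 + HM, Δ' − iΔ''],[Δ' + iΔ'', −H0 + HM]]. Then every eigenvalue E of H satisfies |E| ≥ min(λ₊, λ₋), where λ± are the smallest eigenvalues of Δ' ± HM. -/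
open Matrix ComplexOrder

namespace Stmt4Aux

variable {m : Type*} [Fintype m]

noncomputable def nsq (u : m → ℂ) : ℝ := (star u ⬝ᵥ u).re

lemma nsq_eq_sum (u : m → ℂ) : nsq u = ∑ i, Complex.normSq (u i) := by
  simp only [nsq, dotProduct, Complex.re_sum, Pi.star_apply, Complex.mul_re,
    Complex.normSq_apply, Complex.star_def, Complex.conj_re, Complex.conj_im]
  ring_nf

lemma nsq_nonneg (u : m → ℂ) : 0 ≤ nsq u := by
  rw [nsq_eq_sum]; exact Finset.sum_nonneg fun i _ => Complex.normSq_nonneg _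

lemma herm_conj {A : Matrix m m ℂ} (hA : A.IsHermitian) (a b : m → ℂ) :
    star (star a ⬝ᵥ A *ᵥ b) = star b ⬝ᵥ A *ᵥ a := by
  rw [star_dotProduct, star_star, star_mulVec, dotProduct_mulVec, hA.eq]

lemma herm_im {A : Matrix m m ℂ} (hA : A.IsHermitian) (a : m → ℂ) :
    (star a ⬝ᵥ A *ᵥ a).im = 0 := by
  have h := herm_conj hA a a
  have h2 := congrArg Complex.im h
  simp only [Complex.star_def, Complex.conj_im] at h2
  linarith

lemma quad_lower {n : ℕ} {A : Matrix (Fin n) (Fin n) ℂ} (hA : A.IsHermitian) (u : Fin n → ℂ) :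
    (⨅ i, hA.eigenvalues i) * nsq u ≤ (star u ⬝ᵥ A *ᵥ u).re := by
  set U : Matrix (Fin n) (Fin n) ℂ := (hA.eigenvectorUnitary : Matrix (Fin n) (Fin n) ℂ) with hU
  set w : Fin n → ℂ := (star U) *ᵥ u with hw
  have hsw : star w = star u ᵥ* U := by
    rw [hw, star_mulVec]
    simp [Matrix.star_eq_conjTranspose]
  have h1 : star u ⬝ᵥ A *ᵥ u
      = star w ⬝ᵥ (diagonal (Complex.ofReal ∘ hA.eigenvalues)) *ᵥ w := by
    conv_lhs => rw [hA.spectral_theorem, Unitary.conjStarAlgAut_apply]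
    rw [← mulVec_mulVec, ← mulVec_mulVec, dotProduct_mulVec, ← hsw]
    rfl
  have h2 : star w ⬝ᵥ w = star u ⬝ᵥ u := by
    rw [hsw, hw, dotProduct_mulVec, vecMul_vecMul,
      (Matrix.mem_unitaryGroup_iff).mp (hA.eigenvectorUnitary).2, vecMul_one]
  have h3 : (star u ⬝ᵥ A *ᵥ u).re = ∑ i, hA.eigenvalues i * Complex.normSq (w i) := by
    rw [h1]
    rw [show (diagonal (Complex.ofReal ∘ hA.eigenvalues)) *ᵥ w
        = fun i => (hA.eigenvalues i : ℂ) * w i from funext fun i => by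
          simp [mulVec_diagonal]]
    simp only [dotProduct, Complex.re_sum, Pi.star_apply]
    refine Finset.sum_congr rfl fun i _ => ?_
    have : star (w i) * ((hA.eigenvalues i : ℂ) * w i)
        = (hA.eigenvalues i : ℂ) * Complex.normSq (w i) := by
      rw [Complex.star_def]
      rw [show (starRingEnd ℂ) (w i) * ((hA.eigenvalues i : ℂ) * w i)
        = (hA.eigenvalues i : ℂ) * ((starRingEnd ℂ) (w i) * w i) by ring,
        Complex.conj_mul']
      push_cast [Complex.normSq_eq_norm_sq]
      ring
    rw [this, ← Complex.ofReal_mul, Complex.ofReal_re]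
  have h4 : nsq u = ∑ i, Complex.normSq (w i) := by
    have : (star w ⬝ᵥ w).re = ∑ i, Complex.normSq (w i) := by
      simp only [dotProduct, Complex.re_sum, Pi.star_apply, Complex.star_def,
        Complex.conj_mul']
      simp [← Complex.ofReal_pow, Complex.sq_norm]
    rw [nsq, ← h2, this]
  rw [h3, h4, Finset.mul_sum]
  rcases Nat.eq_zero_or_pos n with hn | hn
  · subst hn; simp
  · haveI : Nonempty (Fin n) := ⟨⟨0, hn⟩⟩
    refine Finset.sum_le_sum fun i _ => ?_
    exact mul_le_mul_of_nonneg_right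
      (ciInf_le (Set.Finite.bddBelow (Set.finite_range _)) i) (Complex.normSq_nonneg _)

end Stmt4Aux

open Stmt4Aux

theorem stmt_4 {n : ℕ} (H0 HM Δ' Δ'' : Matrix (Fin n) (Fin n) ℂ)
    (hH0 : H0.IsHermitian) (hHM : HM.IsHermitian)
    (hΔ' : Δ'.IsHermitian) (hΔ'' : Δ''.IsHermitian)
    (hp : (Δ' + HM).PosDef) (hm : (Δ' - HM).PosDef)
    (lp lm : ℝ)
    (hlp : lp = ⨅ i, hp.1.eigenvalues i) (hlm : lm = ⨅ i, hm.1.eigenvalues i)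
    (H : Matrix (Fin (n + n)) (Fin (n + n)) ℂ)
    (hH : H = Matrix.reindex finSumFinEquiv finSumFinEquiv
      (Matrix.fromBlocks (H0 + HM) (Δ' - Complex.I • Δ'')
        (Δ' + Complex.I • Δ'') (-H0 + HM))) :
    ∀ (E : ℝ) (v : Fin (n + n) → ℂ), v ≠ 0 →
      H.mulVec v = (E : ℂ) • v → min lp lm ≤ |E| := by
  intro E v hv hEv
  set e : Fin n ⊕ Fin n ≃ Fin (n + n) := finSumFinEquiv with he
  set w : Fin n ⊕ Fin n → ℂ := v ∘ e with hwdef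
  set x : Fin n → ℂ := fun i => w (Sum.inl i) with hx
  set y : Fin n → ℂ := fun i => w (Sum.inr i) with hy
  have hwe : w = Sum.elim x y := funext fun i => by cases i <;> rfl
  -- transfer eigen-equation to block form
  have hM : (Matrix.fromBlocks (H0 + HM) (Δ' - Complex.I • Δ'')
      (Δ' + Complex.I • Δ'') (-H0 + HM)) *ᵥ w = (E : ℂ) • w := by
    subst hH
    rw [Matrix.reindex_apply, submatrix_mulVec_equiv] at hEv
    funext j
    have := congrFun hEv (e j)
    simpa [hwdef] using this
  rw [hwe, fromBlocks_mulVec] at hM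
  have eq1 : (H0 + HM) *ᵥ x + (Δ' - Complex.I • Δ'') *ᵥ y = (E : ℂ) • x := by
    funext i
    have := congrFun hM (Sum.inl i)
    simpa [hwe] using this
  have eq2 : (Δ' + Complex.I • Δ'') *ᵥ x + (-H0 + HM) *ᵥ y = (E : ℂ) • y := by
    funext i
    have := congrFun hM (Sum.inr i)
    simpa [hwe] using this
  -- atoms
  set a : ℂ := star y ⬝ᵥ H0 *ᵥ x with ha
  set b : ℂ := star x ⬝ᵥ HM *ᵥ y with hb
  set c : ℂ := star y ⬝ᵥ Δ' *ᵥ y with hc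
  set d : ℂ := star x ⬝ᵥ Δ' *ᵥ x with hd
  set ez : ℂ := star y ⬝ᵥ Δ'' *ᵥ y with hez
  set f : ℂ := star x ⬝ᵥ Δ'' *ᵥ x with hf
  set g : ℂ := star x ⬝ᵥ y with hg
  set p : ℂ := star x ⬝ᵥ Δ' *ᵥ y with hP
  set bx : ℂ := star x ⬝ᵥ HM *ᵥ x with hbx
  set by' : ℂ := star y ⬝ᵥ HM *ᵥ y with hby
  have hconjb : star y ⬝ᵥ HM *ᵥ x = star b := (herm_conj hHM x y).symm
  have hconja : star x ⬝ᵥ H0 *ᵥ y = star a := (herm_conj hH0 y x).symm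
  have hconjp : star y ⬝ᵥ Δ' *ᵥ x = star p := (herm_conj hΔ' x y).symm
  have hconjg : star y ⬝ᵥ x = star g := by
    rw [hg, star_dotProduct]
  -- scalar eigen-equation
  have seq : (a + star b) + (c - Complex.I * ez) + (d + Complex.I * f) + (-(star a) + b)
      = (E : ℂ) * (star g) + (E : ℂ) * g := by
    have t1 := congrArg (fun z => star y ⬝ᵥ z) eq1
    have t2 := congrArg (fun z => star x ⬝ᵥ z) eq2
    simp only [dotProduct_add, add_mulVec, sub_mulVec, neg_mulVec, smul_mulVec,
      dotProduct_sub, dotProduct_neg, dotProduct_smul, smul_eq_mul] at t1 t2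
    rw [hconjb, hconjg] at t1
    rw [hconja] at t2
    rw [← ha, ← hb, ← hc, ← hd, ← hez, ← hf, ← hg] at *
    have := congrArg₂ (· + ·) t1 t2
    linear_combination this
  -- take real parts; im of Hermitian forms vanish
  have hezim : ez.im = 0 := herm_im hΔ'' y
  have hfim : f.im = 0 := herm_im hΔ'' x
  have key : c.re + d.re + 2 * b.re = 2 * E * g.re := by
    have := congrArg Complex.re seq
    simp only [Complex.add_re, Complex.sub_re, Complex.neg_re, Complex.mul_re,
      Complex.I_re, Complex.I_im, Complex.star_def, Complex.conj_re, Complex.conj_im,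
      Complex.ofReal_re, Complex.ofReal_im] at this
    linarith [this]
  -- quadratic form sums
  have qsum : star (x + y) ⬝ᵥ (Δ' + HM) *ᵥ (x + y) + star (x - y) ⬝ᵥ (Δ' - HM) *ᵥ (x - y)
      = 2 * d + 2 * c + 2 * b + 2 * star b := by
    simp only [add_mulVec, sub_mulVec, mulVec_add, mulVec_sub, star_add, star_sub,
      dotProduct_add, dotProduct_sub, add_dotProduct, sub_dotProduct]
    rw [hconjb, hconjp]
    rw [← hb, ← hc, ← hd, ← hP, ← hbx, ← hby]
    ring
  -- norm expansions
  have hplus : nsq (x + y) = nsq x + nsq y + 2 * g.re := by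
    have hc : star (x + y) ⬝ᵥ (x + y) = star x ⬝ᵥ x + star y ⬝ᵥ y + g + star g := by
      simp only [star_add, dotProduct_add, add_dotProduct]
      rw [hconjg, ← hg]; ring
    have h' := congrArg Complex.re hc
    simp only [nsq, Complex.add_re, Complex.sub_re, Complex.star_def, Complex.conj_re] at h' ⊢
    linarith
  have hminus : nsq (x - y) = nsq x + nsq y - 2 * g.re := by
    have hc : star (x - y) ⬝ᵥ (x - y) = star x ⬝ᵥ x + star y ⬝ᵥ y - g - star g := by
      simp only [star_sub, dotProduct_sub, sub_dotProduct]
      rw [hconjg, ← hg]; ring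
    have h' := congrArg Complex.re hc
    simp only [nsq, Complex.add_re, Complex.sub_re, Complex.star_def, Complex.conj_re] at h' ⊢
    linarith
  set N : ℝ := nsq x + nsq y with hN
  have habs : 2 * |g.re| ≤ N := by
    rcases abs_cases g.re with ⟨h1, _⟩ | ⟨h1, _⟩ <;>
      [ (have := nsq_nonneg (x - y); rw [hminus] at this; linarith) ;
        (have := nsq_nonneg (x + y); rw [hplus] at this; linarith) ]
  -- positivity of N
  have hNpos : 0 < N := by
    obtain ⟨j, hj⟩ := Function.ne_iff.mp hv
    have hwj : w (e.symm j) ≠ 0 := by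
      simpa [hwdef] using hj
    have hterm : ∀ (u : Fin n → ℂ) (i : Fin n), u i ≠ 0 → 0 < nsq u := by
      intro u i hu
      rw [nsq_eq_sum]
      have h1 : 0 < Complex.normSq (u i) := Complex.normSq_pos.mpr hu
      exact lt_of_lt_of_le h1 (Finset.single_le_sum
        (fun k _ => Complex.normSq_nonneg (u k)) (Finset.mem_univ i))
    rcases hsm : e.symm j with i | i
    · rw [hsm] at hwj
      have := hterm x i hwj
      have := nsq_nonneg y
      rw [hN]; linarith
    · rw [hsm] at hwj
      have := hterm y i hwj
      have := nsq_nonneg x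
      rw [hN]; linarith
  -- lower bounds from positive-definiteness
  have hqp : lp * nsq (x + y) ≤ (star (x + y) ⬝ᵥ (Δ' + HM) *ᵥ (x + y)).re := by
    rw [hlp]; exact quad_lower hp.1 (x + y)
  have hqm : lm * nsq (x - y) ≤ (star (x - y) ⬝ᵥ (Δ' - HM) *ᵥ (x - y)).re := by
    rw [hlm]; exact quad_lower hm.1 (x - y)
  have hmin : min lp lm * (2 * N) ≤ 2 * (2 * E * g.re) := by
    have hre : (star (x + y) ⬝ᵥ (Δ' + HM) *ᵥ (x + y)).re
        + (star (x - y) ⬝ᵥ (Δ' - HM) *ᵥ (x - y)).re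
        = 2 * (c.re + d.re + 2 * b.re) := by
      have h := congrArg Complex.re qsum
      rw [Complex.add_re] at h
      rw [h]
      have hsb : (star b).re = b.re := by simp [Complex.star_def]
      simp only [Complex.add_re, Complex.mul_re, Complex.re_ofNat, Complex.im_ofNat, hsb]
      ring
    have h1 : min lp lm * nsq (x + y) ≤ lp * nsq (x + y) :=
      mul_le_mul_of_nonneg_right (min_le_left _ _) (nsq_nonneg _)
    have h2 : min lp lm * nsq (x - y) ≤ lm * nsq (x - y) :=
      mul_le_mul_of_nonneg_right (min_le_right _ _) (nsq_nonneg _)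
    have hpar : nsq (x + y) + nsq (x - y) = 2 * N := by rw [hplus, hminus, hN]; ring
    calc min lp lm * (2 * N) = min lp lm * nsq (x + y) + min lp lm * nsq (x - y) := by
          rw [← hpar]; ring
      _ ≤ lp * nsq (x + y) + lm * nsq (x - y) := add_le_add h1 h2
      _ ≤ _ + _ := add_le_add hqp hqm
      _ = 2 * (c.re + d.re + 2 * b.re) := hre
      _ = 2 * (2 * E * g.re) := by rw [key]
  have hupper : 2 * (2 * E * g.re) ≤ |E| * (2 * N) := by
    have h1 : E * g.re ≤ |E| * |g.re| := by
      calc E * g.re ≤ |E * g.re| := le_abs_self _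
        _ = |E| * |g.re| := abs_mul _ _
    have h2 : |E| * (2 * |g.re|) ≤ |E| * N :=
      mul_le_mul_of_nonneg_left habs (abs_nonneg E)
    nlinarith [abs_nonneg E]
  have : min lp lm * (2 * N) ≤ |E| * (2 * N) := le_trans hmin hupper
  exact le_of_mul_le_mul_right this (by linarith)
end

section
/- Weyl's eigenvalue perturbation inequality: if H and P are Hermitian n×n matrices with the operator norm of P at most δ, then for each index i, the i-th eigenvalues (ordered increasingly) of H and H + P satisfy |λ_i(H + P) − λ_i(H)| ≤ δ. -/
/-
Courant–Fischer style argument. Let `T` and `T'` have orthonormal eigenbases `u`, `v` with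
increasing eigenvalues `μ`, `ν`. The span of `u₀, …, uᵢ` (dimension `i + 1`) and the span of
`vᵢ, …, vₙ₋₁` (dimension `n - i`) meet in some `x ≠ 0`. On the first span
`re ⟪T x, x⟫ ≤ μ i ‖x‖²`, on the second `ν i ‖x‖² ≤ re ⟪T' x, x⟫`, and
`re ⟪(T' - T) x, x⟫ ≤ ‖T' - T‖ ‖x‖²`; hence `ν i ≤ μ i + ‖T' - T‖`, and symmetrically.
-/

open Matrix

/-- The eigenvalues of a Hermitian matrix, sorted in increasing order. -/
noncomputable def sortedEigenvalues {n : ℕ} {H : Matrix (Fin n) (Fin n) ℂ}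
    (hH : H.IsHermitian) : Fin n → ℝ :=
  hH.eigenvalues ∘ Tuple.sort hH.eigenvalues

open Module Submodule
open scoped InnerProductSpace

theorem Submodule.exists_mem_inf_ne_zero_of_finrank_lt {K V : Type*} [DivisionRing K]
    [AddCommGroup V] [Module K V] [FiniteDimensional K V] {s t : Submodule K V}
    (h : finrank K V < finrank K s + finrank K t) : ∃ x ∈ s ⊓ t, x ≠ 0 := by
  by_contra! hst
  exact h.not_ge <| finrank_add_finrank_le_of_disjoint <| disjoint_def.mpr fun x hs ht ↦
    hst x (mem_inf.mpr ⟨hs, ht⟩)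

theorem Module.Basis.finrank_span_image_finset {K V ι : Type*} [DivisionRing K]
    [AddCommGroup V] [Module K V] (b : Basis ι K V) (s : Finset ι) :
    finrank K (span K (b '' s)) = s.card := by
  rw [Set.image_eq_range]
  exact (finrank_span_eq_card (b.linearIndependent.comp _ Subtype.val_injective)).trans (by simp)

theorem OrthonormalBasis.repr_apply_eq_zero_of_mem_span {𝕜 E ι : Type*} [RCLike 𝕜]
    [NormedAddCommGroup E] [InnerProductSpace 𝕜 E] [Fintype ι] (b : OrthonormalBasis ι 𝕜 E)
    {s : Set ι} {x : E}
    (hx : x ∈ span 𝕜 (b '' s)) {j : ι} (hj : j ∉ s) : b.repr x j = 0 := by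
  rw [← b.coe_toBasis, Basis.mem_span_image] at hx
  simpa using Finsupp.notMem_support_iff.mp (fun h ↦ hj (hx h))

namespace ContinuousLinearMap

variable {𝕜 E ι : Type*} [RCLike 𝕜] [NormedAddCommGroup E] [InnerProductSpace 𝕜 E] [Fintype ι]

theorem reApplyInnerSelf_le_opNorm_mul_sq (T : E →L[𝕜] E) (x : E) :
    T.reApplyInnerSelf x ≤ ‖T‖ * ‖x‖ ^ 2 := by
  grw [reApplyInnerSelf_apply, RCLike.re_le_norm, norm_inner_le_norm, le_opNorm, mul_assoc, ← sq]

theorem reApplyInnerSelf_add (T S : E →L[𝕜] E) (x : E) :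
    (T + S).reApplyInnerSelf x = T.reApplyInnerSelf x + S.reApplyInnerSelf x := by
  simp only [reApplyInnerSelf_apply, _root_.add_apply, inner_add_left, map_add]

def IsEigenbasis (T : E →L[𝕜] E) (b : OrthonormalBasis ι 𝕜 E) (μ : ι → ℝ) : Prop :=
  ∀ j, T (b j) = (μ j : 𝕜) • b j

variable {T : E →L[𝕜] E} {b : OrthonormalBasis ι 𝕜 E} {μ : ι → ℝ}

theorem IsEigenbasis.repr_apply [DecidableEq ι] (hb : T.IsEigenbasis b μ) (x : E) (j : ι) :
    b.repr (T x) j = μ j * b.repr x j := by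
  conv_lhs => rw [← b.sum_repr x]
  simp [hb _, Pi.single_apply, RCLike.real_smul_eq_coe_mul, mul_comm]

theorem IsEigenbasis.reApplyInnerSelf_eq_sum (hb : T.IsEigenbasis b μ) (x : E) :
    T.reApplyInnerSelf x = ∑ j, μ j * ‖b.repr x j‖ ^ 2 := by
  classical
  rw [reApplyInnerSelf_apply, ← b.repr.inner_map_map, PiLp.inner_apply, map_sum]
  refine Finset.sum_congr rfl fun j _ ↦ ?_
  rw [hb.repr_apply, ← smul_eq_mul, inner_smul_left, RCLike.conj_ofReal, RCLike.re_ofReal_mul,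
    inner_self_eq_norm_sq]

theorem IsEigenbasis.reApplyInnerSelf_le_of_mem_span (hb : T.IsEigenbasis b μ) {s : Set ι}
    {c : ℝ} (hμ : ∀ j ∈ s, μ j ≤ c) {x : E} (hx : x ∈ span 𝕜 (b '' s)) :
    T.reApplyInnerSelf x ≤ c * ‖x‖ ^ 2 := by
  rw [hb.reApplyInnerSelf_eq_sum, ← b.repr.norm_map x, EuclideanSpace.norm_sq_eq, Finset.mul_sum]
  refine Finset.sum_le_sum fun j _ ↦ ?_
  by_cases hj : j ∈ s
  · exact mul_le_mul_of_nonneg_right (hμ j hj) (sq_nonneg _)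
  · simp [b.repr_apply_eq_zero_of_mem_span hx hj]

theorem IsEigenbasis.le_reApplyInnerSelf_of_mem_span (hb : T.IsEigenbasis b μ) {s : Set ι}
    {c : ℝ} (hμ : ∀ j ∈ s, c ≤ μ j) {x : E} (hx : x ∈ span 𝕜 (b '' s)) :
    c * ‖x‖ ^ 2 ≤ T.reApplyInnerSelf x := by
  rw [hb.reApplyInnerSelf_eq_sum, ← b.repr.norm_map x, EuclideanSpace.norm_sq_eq, Finset.mul_sum]
  refine Finset.sum_le_sum fun j _ ↦ ?_
  by_cases hj : j ∈ s
  · exact mul_le_mul_of_nonneg_right (hμ j hj) (sq_nonneg _)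
  · simp [b.repr_apply_eq_zero_of_mem_span hx hj]

theorem IsEigenbasis.le_add_opNorm_sub {n : ℕ} {T' : E →L[𝕜] E}
    {u v : OrthonormalBasis (Fin n) 𝕜 E} {μ ν : Fin n → ℝ} (hu : T.IsEigenbasis u μ)
    (hv : T'.IsEigenbasis v ν) (hμ : Monotone μ) (hν : Monotone ν) (i : Fin n) :
    ν i ≤ μ i + ‖T' - T‖ := by
  have := u.toBasis.finiteDimensional_of_finite
  have hV := u.toBasis.finrank_span_image_finset (Finset.Iic i)
  have hW := v.toBasis.finrank_span_image_finset (Finset.Ici i)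
  rw [OrthonormalBasis.coe_toBasis, Fin.card_Iic] at hV
  rw [OrthonormalBasis.coe_toBasis, Fin.card_Ici] at hW
  have hdim : finrank 𝕜 E < finrank 𝕜 (span 𝕜 (u '' (Finset.Iic i : Set (Fin n)))) +
      finrank 𝕜 (span 𝕜 (v '' (Finset.Ici i : Set (Fin n)))) := by
    rw [finrank_eq_card_basis u.toBasis, hV, hW, Fintype.card_fin]
    omega
  obtain ⟨x, hxVW, hx⟩ := exists_mem_inf_ne_zero_of_finrank_lt hdim
  obtain ⟨hxV, hxW⟩ := mem_inf.mp hxVW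
  have hx2 : 0 < ‖x‖ ^ 2 := by positivity
  have key : ν i * ‖x‖ ^ 2 ≤ (μ i + ‖T' - T‖) * ‖x‖ ^ 2 := calc
    ν i * ‖x‖ ^ 2 ≤ T'.reApplyInnerSelf x :=
      hv.le_reApplyInnerSelf_of_mem_span (fun j hj ↦ hν (Finset.mem_Ici.mp hj)) hxW
    _ = T.reApplyInnerSelf x + (T' - T).reApplyInnerSelf x := by
      rw [← reApplyInnerSelf_add, add_sub_cancel]
    _ ≤ μ i * ‖x‖ ^ 2 + ‖T' - T‖ * ‖x‖ ^ 2 :=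
      add_le_add (hu.reApplyInnerSelf_le_of_mem_span (fun j hj ↦ hμ (Finset.mem_Iic.mp hj)) hxV)
        ((T' - T).reApplyInnerSelf_le_opNorm_mul_sq x)
    _ = (μ i + ‖T' - T‖) * ‖x‖ ^ 2 := by ring
  exact le_of_mul_le_mul_right key hx2

theorem IsEigenbasis.abs_sub_le_opNorm_sub {n : ℕ} {T' : E →L[𝕜] E}
    {u v : OrthonormalBasis (Fin n) 𝕜 E} {μ ν : Fin n → ℝ} (hu : T.IsEigenbasis u μ)
    (hv : T'.IsEigenbasis v ν) (hμ : Monotone μ) (hν : Monotone ν) (i : Fin n) :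
    |ν i - μ i| ≤ ‖T' - T‖ := by
  rw [abs_sub_le_iff]
  constructor
  · linarith [hu.le_add_opNorm_sub hv hμ hν i]
  · linarith [hv.le_add_opNorm_sub hu hν hμ i, norm_sub_rev T T']

end ContinuousLinearMap

theorem monotone_sortedEigenvalues {n : ℕ} {A : Matrix (Fin n) (Fin n) ℂ} (hA : A.IsHermitian) :
    Monotone (sortedEigenvalues hA) :=
  Tuple.monotone_sort _

namespace Matrix.IsHermitian

variable {n : ℕ} {A : Matrix (Fin n) (Fin n) ℂ}

noncomputable def sortedEigenvectorBasis (hA : A.IsHermitian) :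
    OrthonormalBasis (Fin n) ℂ (EuclideanSpace ℂ (Fin n)) :=
  hA.eigenvectorBasis.reindex (Tuple.sort hA.eigenvalues).symm

theorem isEigenbasis_sortedEigenvectorBasis (hA : A.IsHermitian) :
    (toEuclideanCLM (𝕜 := ℂ) A).IsEigenbasis hA.sortedEigenvectorBasis
      (sortedEigenvalues hA) := by
  intro j
  apply (WithLp.equiv 2 (Fin n → ℂ)).injective
  simp [sortedEigenvectorBasis, sortedEigenvalues, ofLp_toEuclideanCLM, hA.mulVec_eigenvectorBasis]

end Matrix.IsHermitian

theorem stmt_6_general {n : ℕ} (H P : Matrix (Fin n) (Fin n) ℂ)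
    (hH : H.IsHermitian)
    (hHP : (H + P).IsHermitian)
    (δ : ℝ) (hnorm : ‖Matrix.toEuclideanCLM (𝕜 := ℂ) P‖ ≤ δ) :
    ∀ i : Fin n, |sortedEigenvalues hHP i - sortedEigenvalues hH i| ≤ δ := by
  intro i
  refine (hH.isEigenbasis_sortedEigenvectorBasis.abs_sub_le_opNorm_sub
    hHP.isEigenbasis_sortedEigenvectorBasis (monotone_sortedEigenvalues hH)
    (monotone_sortedEigenvalues hHP) i).trans ?_
  rwa [map_add, add_sub_cancel_left]

theorem stmt_6 {n : ℕ} (H P : Matrix (Fin n) (Fin n) ℂ)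
    (hH : H.IsHermitian) (hP : P.IsHermitian)
    (hHP : (H + P).IsHermitian)
    (δ : ℝ) (hnorm : ‖Matrix.toEuclideanCLM (𝕜 := ℂ) P‖ ≤ δ) :
    ∀ i : Fin n, |sortedEigenvalues hHP i - sortedEigenvalues hH i| ≤ δ :=
  stmt_6_general H P hH hHP δ hnorm
end

section
/- If Δ' is a positive definite Hermitian n×n matrix with minimal eigenvalue λ and H0 is any Hermitian n×n matrix, then every eigenvalue E of the 2n×2n Hermitian matrix [[H0, Δ'],[Δ', −H0]] satisfies |E| ≥ λ. -/
open Matrix ComplexOrder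

lemma herm_conj {n : ℕ} {A : Matrix (Fin n) (Fin n) ℂ} (hA : A.IsHermitian)
    (x y : Fin n → ℂ) :
    star x ⬝ᵥ (A *ᵥ y) = star (star y ⬝ᵥ (A *ᵥ x)) := by
  rw [star_dotProduct, star_mulVec, ← dotProduct_mulVec, hA.eq]

lemma shift_psd {n : ℕ} {Δ' : Matrix (Fin n) (Fin n) ℂ} (hΔ' : Δ'.PosDef)
    (lam : ℝ) (hlam : ∀ i, lam ≤ hΔ'.1.eigenvalues i) :
    (Δ' - (lam : ℂ) • 1).PosSemidef := by
  have hspec := hΔ'.1.spectral_theorem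
  set U : Matrix (Fin n) (Fin n) ℂ := (hΔ'.1.eigenvectorUnitary : Matrix (Fin n) (Fin n) ℂ)
  have hU : U * star U = 1 := (Matrix.mem_unitaryGroup_iff).mp hΔ'.1.eigenvectorUnitary.2
  have h1 : (lam : ℂ) • (1 : Matrix (Fin n) (Fin n) ℂ)
      = U * ((lam : ℂ) • 1) * star U := by
    rw [Matrix.mul_smul, Matrix.mul_one, Matrix.smul_mul, hU]
  have h2 : Δ' - (lam : ℂ) • 1
      = U * (diagonal (RCLike.ofReal ∘ hΔ'.1.eigenvalues) - (lam : ℂ) • 1) * star U := by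
    rw [Matrix.mul_sub, Matrix.sub_mul, ← h1]
    congr 1
  rw [h2]
  have hd : (diagonal (RCLike.ofReal ∘ hΔ'.1.eigenvalues) - (lam : ℂ) • (1 : Matrix (Fin n) (Fin n) ℂ))
      = diagonal (fun i => (hΔ'.1.eigenvalues i : ℂ) - lam) := by
    ext i j
    by_cases h : i = j <;>
      simp [Matrix.diagonal_apply, Matrix.one_apply, Matrix.sub_apply, h]
  rw [hd, Matrix.star_eq_conjTranspose]
  refine (Matrix.posSemidef_diagonal_iff.mpr (fun i => ?_)).mul_mul_conjTranspose_same U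
  have : (lam : ℂ) ≤ (hΔ'.1.eigenvalues i : ℂ) := by exact_mod_cast hlam i
  exact sub_nonneg.mpr this

lemma rayleigh_lb {n : ℕ} {Δ' : Matrix (Fin n) (Fin n) ℂ} (hΔ' : Δ'.PosDef)
    (lam : ℝ) (hlam : ∀ i, lam ≤ hΔ'.1.eigenvalues i) (x : Fin n → ℂ) :
    lam * (star x ⬝ᵥ x).re ≤ (star x ⬝ᵥ (Δ' *ᵥ x)).re := by
  have h := (shift_psd hΔ' lam hlam).dotProduct_mulVec_nonneg x
  have h' : (star x ⬝ᵥ ((Δ' - (lam : ℂ) • 1) *ᵥ x)).re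
      = (star x ⬝ᵥ (Δ' *ᵥ x)).re - lam * (star x ⬝ᵥ x).re := by
    rw [Matrix.sub_mulVec, dotProduct_sub, Matrix.smul_mulVec, Matrix.one_mulVec,
      dotProduct_smul]
    simp [Complex.sub_re, Complex.mul_re, smul_eq_mul]
  have h0 := (Complex.le_def.mp h).1
  simp only [Complex.zero_re] at h0
  linarith [h0.trans_eq h']

theorem stmt_19 {n : ℕ} (H0 Δ' : Matrix (Fin n) (Fin n) ℂ)
    (hH0 : H0.IsHermitian) (hΔ' : Δ'.PosDef)
    (lam : ℝ) (hlam : lam = ⨅ i, hΔ'.1.eigenvalues i) :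
    ∀ (E : ℝ) (v : Fin n ⊕ Fin n → ℂ), v ≠ 0 →
      (Matrix.fromBlocks H0 Δ' Δ' (-H0)).mulVec v = (E : ℂ) • v →
      lam ≤ |E| := by
  intro E v hv hev
  have hn : v ∘ Sum.inl ≠ 0 ∨ v ∘ Sum.inr ≠ 0 := by
    by_contra h
    push_neg at h
    apply hv
    funext i
    rcases i with i | i
    · exact congrFun h.1 i
    · exact congrFun h.2 i
  set x : Fin n → ℂ := v ∘ Sum.inl with hx
  set y : Fin n → ℂ := v ∘ Sum.inr with hy
  have hlam' : ∀ i, lam ≤ hΔ'.1.eigenvalues i := by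
    intro i
    rw [hlam]
    exact ciInf_le (Finite.bddBelow_range _) i
  have e1 : H0 *ᵥ x + Δ' *ᵥ y = (E : ℂ) • x := by
    funext i
    have := congrFun hev (Sum.inl i)
    simpa [Matrix.fromBlocks_mulVec, hx, hy] using this
  have e2 : Δ' *ᵥ x + (-H0) *ᵥ y = (E : ℂ) • y := by
    funext i
    have := congrFun hev (Sum.inr i)
    simpa [Matrix.fromBlocks_mulVec, hx, hy] using this
  have h1 : star y ⬝ᵥ (H0 *ᵥ x) + star y ⬝ᵥ (Δ' *ᵥ y) = (E : ℂ) * (star y ⬝ᵥ x) := by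
    have := congrArg (fun w => star y ⬝ᵥ w) e1
    simpa [dotProduct_add, dotProduct_smul, smul_eq_mul] using this
  have h2 : star x ⬝ᵥ (Δ' *ᵥ x) - star x ⬝ᵥ (H0 *ᵥ y) = (E : ℂ) * (star x ⬝ᵥ y) := by
    have := congrArg (fun w => star x ⬝ᵥ w) e2
    simpa [dotProduct_add, dotProduct_smul, smul_eq_mul, Matrix.neg_mulVec, dotProduct_neg,
      sub_eq_add_neg] using this
  -- real parts
  set r : ℝ := (star y ⬝ᵥ x).re with hr
  have hxyr : (star x ⬝ᵥ y).re = r := by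
    rw [hr, star_dotProduct (v := x) (w := y)]
    simp
  have hH : (star x ⬝ᵥ (H0 *ᵥ y)).re = (star y ⬝ᵥ (H0 *ᵥ x)).re := by
    rw [herm_conj hH0 x y]; simp
  have key : (star x ⬝ᵥ (Δ' *ᵥ x)).re + (star y ⬝ᵥ (Δ' *ᵥ y)).re = 2 * E * r := by
    have k1 := congrArg Complex.re h1
    have k2 := congrArg Complex.re h2
    simp only [Complex.add_re, Complex.sub_re, Complex.mul_re, Complex.ofReal_re,
      Complex.ofReal_im, zero_mul, sub_zero] at k1 k2
    rw [hxyr] at k2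
    rw [hH] at k2
    linarith [k1, k2]
  set ax : ℝ := (star x ⬝ᵥ x).re with hax
  set ay : ℝ := (star y ⬝ᵥ y).re with hay
  have lbx := rayleigh_lb hΔ' lam hlam' x
  have lby := rayleigh_lb hΔ' lam hlam' y
  -- |2r| ≤ ax + ay
  have hplus : 0 ≤ (star (x + y) ⬝ᵥ (x + y)).re := by
    have := dotProduct_star_self_nonneg (x + y)
    simpa using (Complex.le_def.mp this).1
  have hminus : 0 ≤ (star (x - y) ⬝ᵥ (x - y)).re := by
    have := dotProduct_star_self_nonneg (x - y)
    simpa using (Complex.le_def.mp this).1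
  have hexp1 : (star (x + y) ⬝ᵥ (x + y)).re = ax + ay + 2 * r := by
    simp only [star_add, dotProduct_add, add_dotProduct, Complex.add_re]
    rw [← hax, ← hay, ← hr]
    rw [hxyr]
    ring
  have hexp2 : (star (x - y) ⬝ᵥ (x - y)).re = ax + ay - 2 * r := by
    simp only [star_sub, dotProduct_sub, sub_dotProduct, Complex.sub_re, Complex.add_re]
    rw [← hax, ← hay, ← hr]
    rw [hxyr]
    ring
  -- positivity of ax + ay
  have haxnn : (0:ℝ) ≤ ax := by
    have := dotProduct_star_self_nonneg x
    simpa [hax] using (Complex.le_def.mp this).1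
  have haynn : (0:ℝ) ≤ ay := by
    have := dotProduct_star_self_nonneg y
    simpa [hay] using (Complex.le_def.mp this).1
  have hpos : 0 < ax + ay := by
    rcases hn with h | h
    · have : 0 < star x ⬝ᵥ x := Matrix.dotProduct_star_self_pos_iff.mpr h
      have := (Complex.lt_def.mp this).1
      simp only [Complex.zero_re] at this
      linarith
    · have : 0 < star y ⬝ᵥ y := Matrix.dotProduct_star_self_pos_iff.mpr h
      have := (Complex.lt_def.mp this).1
      simp only [Complex.zero_re] at this
      linarith
  have hb1 : 2 * r ≤ ax + ay := by nlinarith [hminus.trans_eq hexp2]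
  have hb2 : -(ax + ay) ≤ 2 * r := by nlinarith [hplus.trans_eq hexp1]
  have hE1 : E ≤ |E| := le_abs_self E
  have hE2 : -E ≤ |E| := neg_le_abs E
  nlinarith [mul_nonneg (sub_nonneg.mpr hE1) (sub_nonneg.mpr hb1),
    mul_nonneg (sub_nonneg.mpr (neg_le.mp hb2)) (add_nonneg (abs_nonneg E) (le_of_lt hpos)),
    mul_nonneg (sub_nonneg.mpr hE1) (sub_nonneg.mpr (neg_le.mp hb2)),
    mul_nonneg (sub_nonneg.mpr (neg_le_abs E)) (sub_nonneg.mpr hb1),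
    key, lbx, lby, hpos]
end
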